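/- Under the stated block-operator hypotheses, let X be a contractive solution of the Riccati equation A1 X − X A0 − X V X + V* = 0. Then the Hilbert dimension of ker(I − X* X) is at most the minimum of the Hilbert dimensions of ker(A0 − λ) and ker(A1 − λ); in other words, the multiplicity of 1 as a singular value of X is bounded by min{dim ker(A0 − λ), dim ker(A1 − λ)}. -/

import Mathlib

open ContinuousLinearMap
open scoped InnerProductSpace

universe u v

section Aux

variable {H : Type*} [NormedAddCommGroup H] [InnerProductSpace ℂ H] [CompleteSpace H]

lemma aux_isPositive_of_spectrum (T : H →L[ℂ] H) (hT : IsSelfAdjoint T)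
    (h : ∀ z ∈ spectrum ℂ T, 0 ≤ z.re) : T.IsPositive := by
  rw [← ContinuousLinearMap.nonneg_iff_isPositive,
    StarOrderedRing.nonneg_iff_spectrum_nonneg (R := ℝ) T hT]
  intro x hx
  have h2 : (algebraMap ℝ ℂ x) ∈ spectrum ℂ T := by
    rw [← hT.spectrumRestricts.algebraMap_image]
    exact Set.mem_image_of_mem _ hx
  simpa using h _ h2

set_option maxHeartbeats 800000 in
set_option synthInstance.maxHeartbeats 400000 in
lemma aux_apply_eq_zero {T : H →L[ℂ] H} (hT : T.IsPositive) {x : H}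
    (hx : (⟪T x, x⟫_ℂ).re = 0) : T x = 0 := by
  have h0 : (0 : H →L[ℂ] H) ≤ T := (ContinuousLinearMap.nonneg_iff_isPositive T).mpr hT
  set S := CFC.sqrt T with hSdef
  have hSnn : (0 : H →L[ℂ] H) ≤ S := CFC.sqrt_nonneg (a := T)
  have hSS : S * S = T := CFC.sqrt_mul_sqrt_self T h0
  have hSsa : IsSelfAdjoint S := IsSelfAdjoint.of_nonneg hSnn
  have hTx : T x = S (S x) := by rw [← hSS]; rfl
  have had := ContinuousLinearMap.adjoint_inner_left S (S x) x
  rw [hSsa.adjoint_eq] at had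
  have hinner : ⟪x, T x⟫_ℂ = ⟪S x, S x⟫_ℂ := by rw [hTx]; exact had.symm
  have hre : (⟪S x, S x⟫_ℂ).re = 0 := by
    rw [← hinner, ← inner_conj_symm, Complex.conj_re, hx]
  have hsq : ‖S x‖ ^ 2 = 0 := by
    rw [← inner_self_eq_norm_sq (𝕜 := ℂ)]
    exact hre
  have hSx : S x = 0 := norm_eq_zero.mp (pow_eq_zero_iff two_ne_zero |>.mp hsq)
  rw [hTx, hSx, map_zero]

end Aux

set_option maxHeartbeats 1000000 in
/-- **Multiplicity bound for the singular value 1** (inequality (2.35)): for a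
contractive solution `X` of the Riccati equation, the dimension of
`ker(I - X*X)` is at most `min (dim ker(A0-λ)) (dim ker(A1-λ))`. -/
theorem rank_ker_one_sub_adjoint_mul_le
    {H0 : Type u} {H1 : Type v}
    [NormedAddCommGroup H0] [InnerProductSpace ℂ H0] [CompleteSpace H0]
    [NormedAddCommGroup H1] [InnerProductSpace ℂ H1] [CompleteSpace H1]
    [TopologicalSpace.SeparableSpace H0] [TopologicalSpace.SeparableSpace H1]
    (A0 : H0 →L[ℂ] H0) (A1 : H1 →L[ℂ] H1) (V : H1 →L[ℂ] H0) (lam : ℝ)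
    (hA0 : IsSelfAdjoint A0) (hA1 : IsSelfAdjoint A1)
    (hspec0 : ∀ z ∈ spectrum ℂ A0, z.re ≤ lam)
    (hspec1 : ∀ z ∈ spectrum ℂ A1, lam ≤ z.re)
    (X : H0 →L[ℂ] H1) (hX : ‖X‖ ≤ 1)
    (hRic : A1 ∘L X - X ∘L A0 - X ∘L V ∘L X + ContinuousLinearMap.adjoint V = 0) :
    Cardinal.lift.{v} (Module.rank ℂ
        ↥(LinearMap.ker ((ContinuousLinearMap.id ℂ H0 - ContinuousLinearMap.adjoint X ∘L X : H0 →L[ℂ] H0) : H0 →ₗ[ℂ] H0))) ≤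
      min
        (Cardinal.lift.{v} (Module.rank ℂ
          ↥(LinearMap.ker ((A0 - (lam : ℂ) • ContinuousLinearMap.id ℂ H0 : H0 →L[ℂ] H0) : H0 →ₗ[ℂ] H0))))
        (Cardinal.lift.{u} (Module.rank ℂ
          ↥(LinearMap.ker ((A1 - (lam : ℂ) • ContinuousLinearMap.id ℂ H1 : H1 →L[ℂ] H1) : H1 →ₗ[ℂ] H1)))) := by
  -- selfadjointness of scalar multiples of identity
  have hsa_id0 : IsSelfAdjoint ((lam : ℂ) • ContinuousLinearMap.id ℂ H0) := by
    rw [← ContinuousLinearMap.one_def]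
    exact IsSelfAdjoint.smul (show star ((lam:ℝ):ℂ) = ((lam:ℝ):ℂ) by simp) (IsSelfAdjoint.one _)
  have hsa_id1 : IsSelfAdjoint ((lam : ℂ) • ContinuousLinearMap.id ℂ H1) := by
    rw [← ContinuousLinearMap.one_def]
    exact IsSelfAdjoint.smul (show star ((lam:ℝ):ℂ) = ((lam:ℝ):ℂ) by simp) (IsSelfAdjoint.one _)
  -- the two positive operators
  have hid0 : ((lam : ℂ) • ContinuousLinearMap.id ℂ H0) = algebraMap ℂ (H0 →L[ℂ] H0) (lam : ℂ) := by
    rw [Algebra.algebraMap_eq_smul_one, ContinuousLinearMap.one_def]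
  have hid1 : ((lam : ℂ) • ContinuousLinearMap.id ℂ H1) = algebraMap ℂ (H1 →L[ℂ] H1) (lam : ℂ) := by
    rw [Algebra.algebraMap_eq_smul_one, ContinuousLinearMap.one_def]
  have hP0 : IsPositive ((lam : ℂ) • ContinuousLinearMap.id ℂ H0 - A0) := by
    apply aux_isPositive_of_spectrum _ (hsa_id0.sub hA0)
    intro z hz
    rw [hid0, ← spectrum.singleton_sub_eq] at hz
    obtain ⟨a, ha, b, hb, rfl⟩ := Set.mem_sub.mp hz
    rw [Set.mem_singleton_iff] at ha
    subst ha
    have := hspec0 b hb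
    simp only [Complex.sub_re, Complex.ofReal_re]
    linarith
  have hP1 : IsPositive (A1 - (lam : ℂ) • ContinuousLinearMap.id ℂ H1) := by
    apply aux_isPositive_of_spectrum _ (hA1.sub hsa_id1)
    intro z hz
    rw [hid1, ← spectrum.sub_singleton_eq] at hz
    obtain ⟨a, ha, b, hb, rfl⟩ := Set.mem_sub.mp hz
    rw [Set.mem_singleton_iff] at hb
    subst hb
    have := hspec1 a ha
    simp only [Complex.sub_re, Complex.ofReal_re]
    linarith
  -- key pointwise lemma
  have key : ∀ x : H0, ContinuousLinearMap.adjoint X (X x) = x →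
      (A0 - (lam : ℂ) • ContinuousLinearMap.id ℂ H0) x = 0 ∧
      (A1 - (lam : ℂ) • ContinuousLinearMap.id ℂ H1) (X x) = 0 := by
    intro x hx
    have hric : A1 (X x) - X (A0 x) - X (V (X x)) + ContinuousLinearMap.adjoint V x = 0 := by
      have := congrArg (fun (T : H0 →L[ℂ] H1) => T x) hRic
      simpa using this
    have h1 : ⟪X (A0 x), X x⟫_ℂ = ⟪A0 x, x⟫_ℂ := by
      rw [← ContinuousLinearMap.adjoint_inner_right, hx]
    have h2 : ⟪X (V (X x)), X x⟫_ℂ = ⟪V (X x), x⟫_ℂ := by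
      rw [← ContinuousLinearMap.adjoint_inner_right, hx]
    have h3 : ⟪X x, X x⟫_ℂ = ⟪x, x⟫_ℂ := by
      rw [← ContinuousLinearMap.adjoint_inner_right, hx]
    have h4 : ⟪ContinuousLinearMap.adjoint V x, X x⟫_ℂ = ⟪x, V (X x)⟫_ℂ :=
      ContinuousLinearMap.adjoint_inner_left _ _ _
    have e0 : ⟪A1 (X x) - X (A0 x) - X (V (X x)) + ContinuousLinearMap.adjoint V x, X x⟫_ℂ
        = 0 := by rw [hric, inner_zero_left]
    rw [inner_add_left, inner_sub_left, inner_sub_left, h1, h2, h4] at e0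
    have hc : (⟪x, V (X x)⟫_ℂ).re = (⟪V (X x), x⟫_ℂ).re := by
      conv_lhs => rw [← inner_conj_symm]
      exact Complex.conj_re _
    have ereal : (⟪A1 (X x), X x⟫_ℂ).re = (⟪A0 x, x⟫_ℂ).re := by
      have := congrArg Complex.re e0
      simp only [Complex.add_re, Complex.sub_re, Complex.zero_re] at this
      linarith
    -- quadratic forms of the positive operators
    have q1 : 0 ≤ (⟪(A1 - (lam : ℂ) • ContinuousLinearMap.id ℂ H1) (X x), X x⟫_ℂ).re :=
      (Complex.nonneg_iff.mp (hP1.inner_nonneg_left (X x))).1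
    have q0 : 0 ≤ (⟪((lam : ℂ) • ContinuousLinearMap.id ℂ H0 - A0) x, x⟫_ℂ).re :=
      (Complex.nonneg_iff.mp (hP0.inner_nonneg_left x)).1
    have exp1 : (⟪(A1 - (lam : ℂ) • ContinuousLinearMap.id ℂ H1) (X x), X x⟫_ℂ).re
        = (⟪A1 (X x), X x⟫_ℂ).re - lam * (⟪x, x⟫_ℂ).re := by
      rw [ContinuousLinearMap.sub_apply, inner_sub_left]
      simp only [ContinuousLinearMap.smul_apply, ContinuousLinearMap.id_apply,
        inner_smul_left, Complex.sub_re]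
      rw [h3]
      simp [Complex.mul_re, Complex.conj_ofReal, inner_self_im]
    have exp0 : (⟪((lam : ℂ) • ContinuousLinearMap.id ℂ H0 - A0) x, x⟫_ℂ).re
        = lam * (⟪x, x⟫_ℂ).re - (⟪A0 x, x⟫_ℂ).re := by
      rw [ContinuousLinearMap.sub_apply, inner_sub_left]
      simp only [ContinuousLinearMap.smul_apply, ContinuousLinearMap.id_apply,
        inner_smul_left, Complex.sub_re]
      simp [Complex.mul_re, Complex.conj_ofReal, inner_self_im]
    have z1 : (⟪(A1 - (lam : ℂ) • ContinuousLinearMap.id ℂ H1) (X x), X x⟫_ℂ).re = 0 := by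
      rw [exp1]; rw [exp0] at q0; linarith
    have z0 : (⟪((lam : ℂ) • ContinuousLinearMap.id ℂ H0 - A0) x, x⟫_ℂ).re = 0 := by
      rw [exp0]; rw [exp1] at q1; linarith
    have r1 := aux_apply_eq_zero hP1 z1
    have r0 := aux_apply_eq_zero hP0 z0
    refine ⟨?_, r1⟩
    have : (A0 - (lam : ℂ) • ContinuousLinearMap.id ℂ H0) = -((lam : ℂ) • ContinuousLinearMap.id ℂ H0 - A0) := (neg_sub _ _).symm
    rw [this, ContinuousLinearMap.neg_apply, r0, neg_zero]
  -- abbreviations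
  set K := LinearMap.ker ((ContinuousLinearMap.id ℂ H0 - ContinuousLinearMap.adjoint X ∘L X : H0 →L[ℂ] H0) : H0 →ₗ[ℂ] H0) with hK
  have happly : ∀ x : H0,
      (ContinuousLinearMap.id ℂ H0 - ContinuousLinearMap.adjoint X ∘L X) x
        = x - ContinuousLinearMap.adjoint X (X x) := fun _ => rfl
  have hmemK : ∀ x : H0, x ∈ K ↔ ContinuousLinearMap.adjoint X (X x) = x := by
    intro x
    rw [hK, LinearMap.mem_ker]
    constructor
    · intro h
      have h' : x - ContinuousLinearMap.adjoint X (X x) = 0 := (happly x) ▸ h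
      rw [sub_eq_zero] at h'
      exact h'.symm
    · intro h
      show (ContinuousLinearMap.id ℂ H0 - ContinuousLinearMap.adjoint X ∘L X) x = 0
      rw [happly x, h, sub_self]
  refine le_min ?_ ?_
  · -- K ⊆ ker (A0 - λ)
    apply Cardinal.lift_le.mpr
    apply Submodule.rank_mono
    intro x hxK
    rw [LinearMap.mem_ker]
    exact (key x ((hmemK x).mp hxK)).1
  · -- injection x ↦ X x into ker (A1 - λ)
    set ker1 := LinearMap.ker ((A1 - (lam : ℂ) • ContinuousLinearMap.id ℂ H1 : H1 →L[ℂ] H1) : H1 →ₗ[ℂ] H1)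
    have hmaps : ∀ y : K, X ((K.subtype) y) ∈ ker1 := by
      intro y
      rw [LinearMap.mem_ker]
      exact (key y.1 ((hmemK y.1).mp y.2)).2
    let f : K →ₗ[ℂ] ker1 :=
      LinearMap.codRestrict ker1 ((X : H0 →ₗ[ℂ] H1).comp K.subtype) hmaps
    have hinj : Function.Injective f := by
      intro a b hab
      have hXab : X a.1 = X b.1 := congrArg Subtype.val hab
      have : a.1 = b.1 := by
        rw [← (hmemK a.1).mp a.2, ← (hmemK b.1).mp b.2, hXab]
      exact Subtype.ext this
    exact f.lift_rank_le_of_injective hinj
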